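/- arXiv:1806.10686 — 2 statements merged into one kernel-verified Lean document; each statement's English description precedes it below -/
import Mathlib

section
/- Let Y₂,…,Y_{m−1} be independent exponential random variables with Y_i ~ Exp(i) (i = 2,…,m−1) and define φ_m(t) = k for Σ_{i=2}^k Y_i ≤ t < Σ_{i=2}^{k+1} Y_i (k = 1,…,m−1, with Y_m := +∞ and empty sums equal to 0). Then E[∫₀^∞ e^{−t} φ_m(t) dt] = 2(H_m − 1), where H_m is the m-th harmonic number. -/
open MeasureTheory ProbabilityTheory Real Finset
open scoped ENNReal

/-- The characteristic `φ_m(t)`: number of keys in a vertex of the `m`-ary search tree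
at age `t`, namely `k` on `[Σ_{i=2}^k Y_i, Σ_{i=2}^{k+1} Y_i)`; equivalently
`1 + #{k ∈ [2, m-1] : Σ_{i=2}^k Y_i ≤ t}`. -/
noncomputable def phiM (m : ℕ) (Y : ℕ → ℝ) (t : ℝ) : ℝ :=
  1 + ∑ k ∈ Finset.Icc 2 (m - 1),
    (if (∑ i ∈ Finset.Icc 2 k, Y i) ≤ t then (1 : ℝ) else 0)

/-!
Pathwise, since the partial sums `S_k = ∑_{i=2}^k Y_i` are nonnegative, the Laplace transform at
`1` of `φ_m` is `1 + ∑_{k=2}^{m-1} e^{-S_k}`. By independence, `E[e^{-S_k}]` is the product of the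
Laplace transforms `i / (i + 1)` of `Exp(i)`, which telescopes to `2 / (k + 1)`, and
`1 + ∑_{k=2}^{m-1} 2 / (k + 1) = 2 (H_m - 1)`.
-/

namespace ProbabilityTheory

lemma mgf_id_expMeasure {r t : ℝ} (hr : 0 < r) (ht : t < r) :
    mgf id (expMeasure r) t = r / (r - t) := by
  have hdens : ∀ x, (exponentialPDF r x).toReal • rexp (t * x)
      = (Set.Ici 0).indicator (fun x => r * rexp ((t - r) * x)) x := by
    intro x
    rw [exponentialPDF, ENNReal.toReal_ofReal (exponentialPDFReal_nonneg hr x),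
      exponentialPDFReal, gammaPDFReal]
    by_cases hx : 0 ≤ x
    · rw [if_pos hx, Set.indicator_of_mem (Set.mem_Ici.2 hx), smul_eq_mul, rpow_one, Gamma_one,
        div_one, sub_self, rpow_zero, mul_one, mul_assoc, ← exp_add]
      ring_nf
    · simp [hx]
  rw [mgf, show expMeasure r = volume.withDensity (exponentialPDF r) from rfl,
    integral_withDensity_eq_integral_toReal_smul (f := exponentialPDF r)
      (measurable_exponentialPDFReal r).ennreal_ofReal
      (Filter.Eventually.of_forall fun _ => ENNReal.ofReal_lt_top)]
  simp only [id, hdens]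
  rw [integral_indicator measurableSet_Ici, integral_Ici_eq_integral_Ioi, integral_const_mul,
    integral_exp_mul_Ioi (by linarith) 0, mul_zero, exp_zero, ← neg_sub, div_neg, neg_div, neg_neg,
    mul_one_div]

variable {Ω : Type*} {mΩ : MeasurableSpace Ω} {μ : Measure Ω}

lemma ae_nonneg_of_map_eq_expMeasure {X : Ω → ℝ} {r : ℝ} (hX : Measurable X)
    (h : μ.map X = expMeasure r) : ∀ᵐ ω ∂μ, 0 ≤ X ω := by
  have hneg : μ.map X (Set.Iio 0) = 0 := by
    rw [h, show expMeasure r = volume.withDensity (exponentialPDF r) from rfl,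
      withDensity_apply _ measurableSet_Iio]
    exact lintegral_exponentialPDF_of_nonpos le_rfl
  rw [Measure.map_apply hX measurableSet_Iio] at hneg
  filter_upwards [measure_eq_zero_iff_ae_notMem.1 hneg] with ω hω
  simpa using hω

lemma iIndepFun.integral_exp_neg_sum {ι : Type*} {X : ι → Ω → ℝ} {r : ι → ℝ}
    (hindep : iIndepFun X μ) (hmeas : ∀ i, Measurable (X i)) {s : Finset ι}
    (hr : ∀ i ∈ s, 0 < r i) (hX : ∀ i ∈ s, μ.map (X i) = expMeasure (r i)) :
    ∫ ω, rexp (-∑ i ∈ s, X i ω) ∂μ = ∏ i ∈ s, r i / (r i + 1) := by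
  have hmgf : ∀ i ∈ s, mgf (X i) μ (-1) = r i / (r i + 1) := by
    intro i hi
    rw [← mgf_id_map (hmeas i).aemeasurable, hX i hi,
      mgf_id_expMeasure (hr i hi) (by linarith [hr i hi]), sub_neg_eq_add]
  rw [← prod_congr rfl hmgf, ← hindep.mgf_sum hmeas]
  simp [mgf, Finset.sum_apply]

end ProbabilityTheory

lemma prod_Icc_two_div_add_one {k : ℕ} (hk : 1 ≤ k) :
    ∏ i ∈ Icc 2 k, ((i : ℝ) / (i + 1)) = 2 / (k + 1) := by
  induction k, hk using Nat.le_induction with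
  | base => norm_num
  | succ k hk ih =>
    rw [prod_Icc_succ_top (by omega), ih]
    push_cast
    field_simp

lemma one_add_sum_Icc_two_div_add_one {m : ℕ} (hm : 2 ≤ m) :
    1 + ∑ k ∈ Icc 2 (m - 1), 2 / ((k : ℝ) + 1) = 2 * ((∑ i ∈ Icc 1 m, (1 : ℝ) / i) - 1) := by
  induction m, hm using Nat.le_induction with
  | base => norm_num [show Icc 1 2 = {1, 2} from rfl]
  | succ m hm ih =>
    obtain ⟨n, rfl⟩ : ∃ n, m = n + 1 := ⟨m - 1, by omega⟩
    rw [Nat.add_sub_cancel] at ih ⊢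
    rw [sum_Icc_succ_top (by omega), sum_Icc_succ_top (by omega : 1 ≤ n + 1 + 1)]
    push_cast
    linear_combination ih

lemma setIntegral_Ioi_exp_neg_mul_ite_le {s : ℝ} (hs : 0 ≤ s) :
    ∫ t in Set.Ioi 0, rexp (-t) * (if s ≤ t then (1 : ℝ) else 0) = rexp (-s) := by
  have hind : ∀ t, rexp (-t) * (if s ≤ t then (1 : ℝ) else 0)
      = (Set.Ici s).indicator (fun t => rexp (-t)) t := by
    intro t
    by_cases ht : s ≤ t <;> simp [ht]
  simp only [hind]
  rw [← integral_Ici_eq_integral_Ioi, setIntegral_indicator measurableSet_Ici, Set.Ici_inter_Ici,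
    sup_eq_right.2 hs, integral_Ici_eq_integral_Ioi, integral_exp_neg_Ioi]

lemma setIntegral_Ioi_exp_neg_mul_phiM {m : ℕ} {y : ℕ → ℝ}
    (hy : ∀ i ∈ Icc 2 (m - 1), 0 ≤ y i) :
    ∫ t in Set.Ioi 0, rexp (-t) * phiM m y t
      = 1 + ∑ k ∈ Icc 2 (m - 1), rexp (-∑ i ∈ Icc 2 k, y i) := by
  have hexp : IntegrableOn (fun t => rexp (-t)) (Set.Ioi 0) := by
    simpa using exp_neg_integrableOn_Ioi 0 one_pos
  have hterm : ∀ s : ℝ,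
      IntegrableOn (fun t => rexp (-t) * if s ≤ t then (1 : ℝ) else 0) (Set.Ioi 0) := by
    intro s
    have hmeas : Measurable fun t : ℝ => rexp (-t) * if s ≤ t then (1 : ℝ) else 0 :=
      measurable_neg.exp.mul <| Measurable.ite (measurableSet_le measurable_const measurable_id)
        measurable_const measurable_const
    refine hexp.mono' hmeas.aestronglyMeasurable (ae_of_all _ fun t => ?_)
    by_cases ht : s ≤ t <;> simp [ht, (exp_pos _).le]
  have hpartial : ∀ k ∈ Icc 2 (m - 1), 0 ≤ ∑ i ∈ Icc 2 k, y i := fun k hk =>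
    sum_nonneg fun i hi => hy i (Icc_subset_Icc_right (mem_Icc.1 hk).2 hi)
  simp only [phiM, mul_add, mul_one, mul_sum]
  rw [integral_add hexp (integrable_finsetSum _ fun k _ => hterm _),
    integral_finsetSum _ fun k _ => hterm _, integral_exp_neg_Ioi_zero]
  exact congrArg _ <| sum_congr rfl fun k hk =>
    setIntegral_Ioi_exp_neg_mul_ite_le (hpartial k hk)

theorem stmt6 {Ω : Type*} [MeasureSpace Ω] [IsProbabilityMeasure (ℙ : Measure Ω)]
    (m : ℕ) (hm : 2 ≤ m)
    (Y : ℕ → Ω → ℝ)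
    (hmeasY : ∀ i, Measurable (Y i))
    (hY : ∀ i ∈ Finset.Icc 2 (m - 1), Measure.map (Y i) ℙ = expMeasure i)
    (hindep : iIndepFun Y ℙ) :
    ∫ ω, (∫ t in Set.Ioi (0:ℝ), Real.exp (-t) * phiM m (fun i => Y i ω) t) ∂ℙ
      = 2 * ((∑ i ∈ Finset.Icc 1 m, (1 : ℝ) / i) - 1) := by
  have hnonneg : ∀ᵐ ω ∂ℙ, ∀ i ∈ Icc 2 (m - 1), 0 ≤ Y i ω :=
    (Filter.eventually_all_finset _).2 fun i hi =>
      ae_nonneg_of_map_eq_expMeasure (hmeasY i) (hY i hi)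
  have hmoment :
      ∀ k ∈ Icc 2 (m - 1), ∫ ω, rexp (-∑ i ∈ Icc 2 k, Y i ω) ∂ℙ = 2 / ((k : ℝ) + 1) := by
    intro k hk
    have hsub : Icc 2 k ⊆ Icc 2 (m - 1) := Icc_subset_Icc_right (mem_Icc.1 hk).2
    rw [hindep.integral_exp_neg_sum hmeasY
      (fun i hi => by have := (mem_Icc.1 hi).1; positivity) (fun i hi => hY i (hsub hi)),
      prod_Icc_two_div_add_one (by grind)]
  -- a non-integrable function would have Bochner integral `0`
  have hint :
      ∀ k ∈ Icc 2 (m - 1), Integrable (fun ω => rexp (-∑ i ∈ Icc 2 k, Y i ω)) ℙ :=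
    fun k hk => Integrable.of_integral_ne_zero (by rw [hmoment k hk]; positivity)
  calc _ = ∫ ω, 1 + ∑ k ∈ Icc 2 (m - 1), rexp (-∑ i ∈ Icc 2 k, Y i ω) ∂ℙ :=
        integral_congr_ae (hnonneg.mono fun ω hω => setIntegral_Ioi_exp_neg_mul_phiM hω)
    _ = 1 + ∑ k ∈ Icc 2 (m - 1), 2 / ((k : ℝ) + 1) := by
        rw [integral_add (integrable_const 1) (integrable_finsetSum _ hint),
          integral_finsetSum _ hint, sum_congr rfl hmoment]
        simp
    _ = _ := one_add_sum_Icc_two_div_add_one hm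
end

section
/- Fix ℓ ∈ ℕ and let Y₁,…,Y_{ℓ+1} be independent with Y_i ~ Exp(ℓ+i). Define φ_ℓ(t) = ℓ+k for Σ_{i=1}^k Y_i ≤ t < Σ_{i=1}^{k+1} Y_i (0 ≤ k ≤ ℓ) and φ_ℓ(t) = 1 for t ≥ Σ_{i=1}^{ℓ+1} Y_i. Then E[∫₀^∞ e^{−t} φ_ℓ(t) dt] = (ℓ+1)(H_{2ℓ+2} − H_{ℓ+1}). -/
open MeasureTheory ProbabilityTheory Real Finset
open scoped ENNReal

/-- The characteristic `φ_ℓ(t)` of the median-of-(2ℓ+1) binary search tree: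
`φ_ℓ(t) = ℓ + k` for `Σ_{i=1}^k Y_i ≤ t < Σ_{i=1}^{k+1} Y_i` (`0 ≤ k ≤ ℓ`),
and `φ_ℓ(t) = 1` for `t ≥ Σ_{i=1}^{ℓ+1} Y_i`. -/
noncomputable def phiMed (ℓ : ℕ) (Y : ℕ → ℝ) (t : ℝ) : ℝ :=
  if (∑ i ∈ Finset.Icc 1 (ℓ + 1), Y i) ≤ t then 1
  else (ℓ : ℝ) + ∑ k ∈ Finset.Icc 1 ℓ,
    (if (∑ i ∈ Finset.Icc 1 k, Y i) ≤ t then (1 : ℝ) else 0)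

/-!
Write `S_k = Y_1 + ⋯ + Y_k`. Since the `S_k` increase with `k`, pathwise
`φ_ℓ(t) = ℓ + Σ_{k ≤ ℓ} 1[S_k ≤ t] - (2ℓ - 1)·1[S_{ℓ+1} ≤ t]`, and integrating against `e^{-t}`
gives `ℓ + Σ_{k ≤ ℓ} e^{-S_k} - (2ℓ - 1) e^{-S_{ℓ+1}}`. By independence `E e^{-S_k}` is the
product of the Laplace transforms `(ℓ+i)/(ℓ+i+1)` at `1`, which telescopes to `(ℓ+1)/(ℓ+k+1)`.
What remains is `(ℓ+1) Σ_{k=1}^{ℓ+1} 1/(ℓ+1+k) = (ℓ+1)(H_{2ℓ+2} - H_{ℓ+1})`.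
-/

namespace ProbabilityTheory

lemma ae_nonneg_expMeasure (r : ℝ) : ∀ᵐ x ∂expMeasure r, 0 ≤ x := by
  rw [ae_iff]
  simp only [not_le]
  change expMeasure r (Set.Iio 0) = 0
  rw [expMeasure, gammaMeasure, withDensity_apply _ measurableSet_Iio]
  exact lintegral_exponentialPDF_of_nonpos le_rfl

lemma mgf_sum_of_map_eq_expMeasure {ι Ω : Type*} [MeasurableSpace Ω] {μ : Measure Ω}
    {Y : ι → Ω → ℝ} {r : ι → ℝ} {t : ℝ} (hindep : iIndepFun Y μ) (hmeas : ∀ i, Measurable (Y i))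
    (s : Finset ι) (hY : ∀ i ∈ s, μ.map (Y i) = expMeasure (r i)) (hr : ∀ i ∈ s, 0 < r i)
    (ht : ∀ i ∈ s, t < r i) :
    mgf (∑ i ∈ s, Y i) μ t = ∏ i ∈ s, r i / (r i - t) := by
  rw [hindep.mgf_sum hmeas]
  refine prod_congr rfl fun i hi => ?_
  rw [← mgf_id_map (hmeas i).aemeasurable, hY i hi, mgf_id_expMeasure (hr i hi) (ht i hi)]

end ProbabilityTheory

lemma prod_Icc_add_div_add_add_one {a : ℝ} (ha : -1 < a) (k : ℕ) :
    ∏ i ∈ Icc 1 k, (a + i) / (a + i + 1) = (a + 1) / (a + k + 1) := by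
  induction k with
  | zero => simp [div_self (by linarith : a + 1 ≠ 0)]
  | succ n ih =>
    have hn : (0 : ℝ) ≤ n := n.cast_nonneg
    rw [prod_Icc_succ_top (by omega), ih]
    push_cast
    field_simp [show a + n + 1 ≠ 0 by linarith, show a + (n + 1) + 1 ≠ 0 by linarith]
    ring

lemma integral_exp_neg_sum_Icc {Ω : Type*} [MeasurableSpace Ω] {μ : Measure Ω}
    {Y : ℕ → Ω → ℝ} (hindep : iIndepFun Y μ) (hmeas : ∀ i, Measurable (Y i)) {a : ℝ}
    (ha : -1 < a) (k : ℕ) (hY : ∀ i ∈ Icc 1 k, μ.map (Y i) = expMeasure (a + i)) :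
    ∫ ω, exp (-∑ i ∈ Icc 1 k, Y i ω) ∂μ = (a + 1) / (a + k + 1) := by
  have hpos : ∀ i ∈ Icc 1 k, 0 < a + i := fun i hi => by
    have : (1 : ℝ) ≤ i := by exact_mod_cast (mem_Icc.mp hi).1
    linarith
  have hmgf := mgf_sum_of_map_eq_expMeasure (t := -1) hindep hmeas (Icc 1 k) hY hpos
    (fun i hi => by linarith [hpos i hi])
  simp only [mgf, Finset.sum_apply, neg_one_mul, sub_neg_eq_add] at hmgf
  rw [hmgf, prod_Icc_add_div_add_add_one ha]

lemma exp_neg_mul_ite_le_eq_indicator (s t : ℝ) :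
    exp (-t) * (if s ≤ t then 1 else 0) = (Set.Ici s).indicator (fun t => exp (-t)) t := by
  simp [Set.indicator_apply]

lemma setIntegral_Ioi_zero_exp_neg_mul_ite {s : ℝ} (hs : 0 ≤ s) :
    ∫ t in Set.Ioi 0, exp (-t) * (if s ≤ t then 1 else 0) = exp (-s) := by
  have hset : (Set.Ioi (0 : ℝ) ∩ Set.Ici s : Set ℝ) =ᵐ[volume] Set.Ici s := by
    have h := (Ioi_ae_eq_Ici (μ := volume) (a := (0 : ℝ))).inter
      (Filter.EventuallyEq.refl (ae volume) (Set.Ici s))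
    rwa [Set.Ici_inter_Ici, max_eq_right hs] at h
  simp_rw [exp_neg_mul_ite_le_eq_indicator]
  rw [setIntegral_indicator measurableSet_Ici, setIntegral_congr_set hset,
    integral_Ici_eq_integral_Ioi, integral_exp_neg_Ioi]

lemma integrableOn_Ioi_zero_exp_neg_mul_ite (s : ℝ) :
    IntegrableOn (fun t => exp (-t) * if s ≤ t then 1 else 0) (Set.Ioi 0) := by
  simp_rw [exp_neg_mul_ite_le_eq_indicator]
  exact (integrableOn_exp_neg_Ioi 0).indicator measurableSet_Ici

lemma phiMed_eq_add_sum_sub {ℓ : ℕ} {Z : ℕ → ℝ}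
    (hmono : ∀ k ∈ Icc 1 ℓ, ∑ i ∈ Icc 1 k, Z i ≤ ∑ i ∈ Icc 1 (ℓ + 1), Z i) (t : ℝ) :
    phiMed ℓ Z t = ℓ + ∑ k ∈ Icc 1 ℓ, (if ∑ i ∈ Icc 1 k, Z i ≤ t then 1 else 0)
      - (2 * ℓ - 1) * (if ∑ i ∈ Icc 1 (ℓ + 1), Z i ≤ t then 1 else 0) := by
  rw [phiMed]
  split_ifs with h
  · rw [sum_congr rfl fun k hk => if_pos ((hmono k hk).trans h)]
    simp only [sum_const, Nat.card_Icc, add_tsub_cancel_right, nsmul_eq_mul, mul_one]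
    ring
  · ring

lemma setIntegral_exp_neg_mul_phiMed {ℓ : ℕ} {Z : ℕ → ℝ} (hZ : ∀ i ∈ Icc 1 (ℓ + 1), 0 ≤ Z i) :
    ∫ t in Set.Ioi 0, exp (-t) * phiMed ℓ Z t
      = ℓ + ∑ k ∈ Icc 1 ℓ, exp (-∑ i ∈ Icc 1 k, Z i)
        - (2 * ℓ - 1) * exp (-∑ i ∈ Icc 1 (ℓ + 1), Z i) := by
  have hS : ∀ k ≤ ℓ + 1, 0 ≤ ∑ i ∈ Icc 1 k, Z i := fun k hk =>
    sum_nonneg fun i hi => hZ i (Icc_subset_Icc_right hk hi)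
  have hmono : ∀ k ∈ Icc 1 ℓ, ∑ i ∈ Icc 1 k, Z i ≤ ∑ i ∈ Icc 1 (ℓ + 1), Z i := fun k hk =>
    sum_le_sum_of_subset_of_nonneg (Icc_subset_Icc_right (by grind)) fun i hi _ => hZ i hi
  have hexp := integrableOn_exp_neg_Ioi 0
  have hind := integrableOn_Ioi_zero_exp_neg_mul_ite
  have hsum : IntegrableOn
      (fun t => ∑ k ∈ Icc 1 ℓ, exp (-t) * if ∑ i ∈ Icc 1 k, Z i ≤ t then 1 else 0) (Set.Ioi 0) :=
    integrable_finsetSum _ fun k _ => hind _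
  simp_rw [phiMed_eq_add_sum_sub hmono, mul_sub, mul_add, mul_sum,
    mul_left_comm (exp _) (2 * (ℓ : ℝ) - 1)]
  rw [integral_sub ((hexp.mul_const _).fun_add hsum) ((hind _).const_mul _),
    integral_add (hexp.mul_const _) hsum, integral_finsetSum _ fun k _ => hind _,
    integral_mul_const, integral_exp_neg_Ioi_zero, integral_const_mul,
    setIntegral_Ioi_zero_exp_neg_mul_ite (hS _ le_rfl),
    sum_congr rfl fun k hk => setIntegral_Ioi_zero_exp_neg_mul_ite (hS k (by grind))]
  ring

lemma sum_Icc_add_sub_sum_Icc {M : Type*} [AddCommGroup M] (f : ℕ → M) (n m : ℕ) :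
    ∑ i ∈ Icc 1 (n + m), f i - ∑ i ∈ Icc 1 n, f i = ∑ k ∈ Icc 1 m, f (n + k) := by
  induction m with
  | zero => simp
  | succ m ih =>
    rw [← add_assoc, sum_Icc_succ_top (by omega), sum_Icc_succ_top (by omega), ← ih,
      sub_add_eq_add_sub, ← add_assoc]

lemma add_sum_div_sub_eq_mul_harmonic_sub (ℓ : ℕ) :
    (ℓ : ℝ) + ∑ k ∈ Icc 1 ℓ, ((ℓ : ℝ) + 1) / (ℓ + k + 1)
      - (2 * ℓ - 1) * (((ℓ : ℝ) + 1) / (ℓ + ↑(ℓ + 1) + 1))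
      = (ℓ + 1) * (∑ i ∈ Icc 1 (2 * ℓ + 2), (1 : ℝ) / i - ∑ i ∈ Icc 1 (ℓ + 1), (1 : ℝ) / i) := by
  have hterm (k : ℕ) : ((ℓ : ℝ) + 1) * (1 / ((ℓ + 1 + k : ℕ) : ℝ)) = (ℓ + 1) / (ℓ + k + 1) := by
    push_cast; ring
  rw [show 2 * ℓ + 2 = (ℓ + 1) + (ℓ + 1) by ring, sum_Icc_add_sub_sum_Icc,
    sum_Icc_succ_top (by omega), mul_add, mul_sum, sum_congr rfl fun k _ => hterm k]
  field_simp
  push_cast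
  ring

theorem stmt8 {Ω : Type*} [MeasureSpace Ω] [IsProbabilityMeasure (ℙ : Measure Ω)]
    (ℓ : ℕ)
    (Y : ℕ → Ω → ℝ)
    (hmeasY : ∀ i, Measurable (Y i))
    (hY : ∀ i ∈ Finset.Icc 1 (ℓ + 1), Measure.map (Y i) ℙ = expMeasure (ℓ + i))
    (hindep : iIndepFun Y ℙ) :
    ∫ ω, (∫ t in Set.Ioi (0:ℝ), Real.exp (-t) * phiMed ℓ (fun i => Y i ω) t) ∂ℙ
      = ((ℓ : ℝ) + 1) *
        ((∑ i ∈ Finset.Icc 1 (2*ℓ + 2), (1 : ℝ) / i) - ∑ i ∈ Finset.Icc 1 (ℓ + 1), (1 : ℝ) / i)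
      := by
  have hnonneg : ∀ᵐ ω ∂ℙ, ∀ i ∈ Icc 1 (ℓ + 1), 0 ≤ Y i ω :=
    (Filter.eventually_all_finset _).2 fun i hi =>
      ae_of_ae_map (hmeasY i).aemeasurable (hY i hi ▸ ae_nonneg_expMeasure _)
  have hmean : ∀ k ≤ ℓ + 1, ∫ ω, exp (-∑ i ∈ Icc 1 k, Y i ω) = ((ℓ : ℝ) + 1) / (ℓ + k + 1) :=
    fun k hk => integral_exp_neg_sum_Icc hindep hmeasY (by linarith [ℓ.cast_nonneg (α := ℝ)]) k
      fun i hi => hY i (Icc_subset_Icc_right hk hi)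
  have hint : ∀ k ≤ ℓ + 1, Integrable (fun ω => exp (-∑ i ∈ Icc 1 k, Y i ω)) :=
    fun k hk => .of_integral_ne_zero (by rw [hmean k hk]; positivity)
  have hint_sum : Integrable (fun ω => ∑ k ∈ Icc 1 ℓ, exp (-∑ i ∈ Icc 1 k, Y i ω)) :=
    integrable_finsetSum _ fun k hk => hint k (by grind)
  rw [integral_congr_ae (hnonneg.mono fun ω => setIntegral_exp_neg_mul_phiMed),
    integral_sub ((integrable_const _).fun_add hint_sum) ((hint _ le_rfl).const_mul _),
    integral_add (integrable_const _) hint_sum, integral_finsetSum _ fun k hk => hint k (by grind),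
    integral_const, integral_const_mul, hmean _ le_rfl,
    sum_congr rfl fun k hk => hmean k (by grind)]
  simp only [probReal_univ, smul_eq_mul, one_mul]
  exact add_sum_div_sub_eq_mul_harmonic_sub ℓ
end
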